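/- Let r_1, …, r_n be a list of c-tuples (table rows) sorted in lexicographic order, where the t-th column takes n_t distinct values among the rows. Encode column i with unary codes: each of its n_i distinct values is assigned a distinct bit vector of length n_i with exactly one 1-bit, and for each code position p form the bitmap whose j-th bit is the p-th bit of the code of the i-th component of r_j. Fix a word length w ≥ 1 with w dividing n. Then the total number of dirty words over the n_i bitmaps of column i is at most 2·n_1·n_2·⋯·n_i. -/

import Mathlib

open scoped Classical

/-- Lexicographic (non-strict) order on rows `∀ t : Fin c, V t`: two rows are
related when they are equal or the first component where they differ is smaller
in the left row. -/
def lexLe {c : ℕ} {V : Fin c → Type*} [∀ t, LinearOrder (V t)]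
    (x y : ∀ t, V t) : Prop :=
  x = y ∨ ∃ j : Fin c, (∀ i, i < j → x i = y i) ∧ x j < y j

/-- The number of distinct values of column `t` occurring among the first `n` rows. -/
noncomputable def nvals (n : ℕ) {c : ℕ} {V : Fin c → Type*}
    (row : ℕ → ∀ t, V t) (t : Fin c) : ℕ :=
  ((Finset.range n).image (fun j => row j t)).card

/-! In a word of `w` bits, the bitmap of a code position `p` is dirty only if the column-`i`
value switches to or from the value coded by `p` inside the word, so a word has at most twice as
many dirty bitmaps as value changes. The words are disjoint, so the total is at most twice the
number of changes of column `i` along the table. Since the table is sorted, the prefixes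
(columns `≤ i`) of consecutive rows are lexicographically nondecreasing and each change of
column `i` is a strict increase of the prefix. So the prefix of the row following a change
determines the change, and there are at most `n_1 ⋯ n_i` prefixes. -/

open Finset

def changePoints {α : Type*} [DecidableEq α] (g : ℕ → α) (m : ℕ) : Finset ℕ :=
  {j ∈ range (m - 1) | g j ≠ g (j + 1)}

theorem exists_mem_Ico_ne_succ {β : Type*} (f : ℕ → β) {a b : ℕ} (hab : a ≤ b) (h : f a ≠ f b) :
    ∃ j ∈ Ico a b, f j ≠ f (j + 1) := by
  induction b, hab using Nat.le_induction with
  | base => exact absurd rfl h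
  | succ b hab ih =>
    by_cases hb : f a = f b
    · exact ⟨b, mem_Ico.2 ⟨hab, lt_add_one b⟩, hb ▸ h⟩
    · obtain ⟨j, hj, hne⟩ := ih hb
      exact ⟨j, Ico_subset_Ico_right (Nat.le_succ b) hj, hne⟩

theorem mem_biUnion_changePoints_of_decide_ne {α : Type*} [DecidableEq α] (g : ℕ → α)
    {w : ℕ} {p : α} {j₁ j₂ : ℕ} (hj₁ : j₁ < w) (hj₂ : j₂ < w)
    (h : decide (g j₁ = p) ≠ decide (g j₂ = p)) :
    p ∈ (changePoints g w).biUnion fun j => {g j, g (j + 1)} := by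
  wlog h₁₂ : j₁ ≤ j₂ generalizing j₁ j₂
  · exact this hj₂ hj₁ (Ne.symm h) (le_of_not_ge h₁₂)
  obtain ⟨j, hj, hne⟩ := exists_mem_Ico_ne_succ (fun j => decide (g j = p)) h₁₂ h
  obtain ⟨-, hj⟩ := mem_Ico.1 hj
  refine mem_biUnion.2 ⟨j, mem_filter.2 ⟨mem_range.2 (by omega), fun hg => hne ?_⟩, ?_⟩
  · simp only [hg]
  · by_contra hp
    simp only [mem_insert, mem_singleton, not_or] at hp
    exact hne (by simp [Ne.symm hp.1, Ne.symm hp.2])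

theorem card_nonconstant_indicators_le {α : Type*} [DecidableEq α] (g : ℕ → α) (s : Finset α)
    (w : ℕ) :
    #{p ∈ s | ∃ j₁ ∈ range w, ∃ j₂ ∈ range w, decide (g j₁ = p) ≠ decide (g j₂ = p)}
      ≤ 2 * #(changePoints g w) := by
  calc _ ≤ #((changePoints g w).biUnion fun j => {g j, g (j + 1)}) := by
        refine card_le_card fun p hp => ?_
        obtain ⟨-, j₁, hj₁, j₂, hj₂, h⟩ := mem_filter.1 hp
        exact mem_biUnion_changePoints_of_decide_ne g (mem_range.1 hj₁) (mem_range.1 hj₂) h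
    _ ≤ ∑ _ ∈ changePoints g w, 2 := card_biUnion_le.trans (sum_le_sum fun _ _ => card_le_two)
    _ = 2 * #(changePoints g w) := by rw [sum_const, smul_eq_mul, mul_comm]

theorem sum_card_changePoints_window_le {α : Type*} [DecidableEq α] (g : ℕ → α) {m w N : ℕ}
    (hN : m * w ≤ N) :
    ∑ q ∈ range m, #(changePoints (fun j => g (q * w + j)) w) ≤ #(changePoints g N) := by
  rw [← card_sigma]
  refine card_le_card_of_injOn (fun x => x.1 * w + x.2) ?_ ?_
  · rintro ⟨q, j⟩ hx
    simp only [changePoints, coe_sigma, Set.mem_sigma_iff, mem_coe, mem_range, mem_filter] at hx ⊢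
    have : q * w + w ≤ m * w := by simpa [add_mul] using Nat.mul_le_mul_right w hx.1
    exact ⟨by omega, hx.2.2⟩
  · rintro ⟨q, j⟩ hx ⟨q', j'⟩ hx' heq
    simp only [changePoints, coe_sigma, Set.mem_sigma_iff, mem_coe, mem_range, mem_filter]
      at hx hx' heq
    have hw : 0 < w := by omega
    have hq : q = q' := by
      have := congrArg (· / w) heq
      rwa [mul_comm q, mul_comm q', Nat.mul_add_div hw, Nat.mul_add_div hw,
        Nat.div_eq_of_lt (by omega), Nat.div_eq_of_lt (by omega), add_zero, add_zero] at this
    subst hq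
    simp only [Sigma.mk.injEq, heq_eq_eq, true_and]
    omega

theorem MonotoneOn.card_changePoints_le {α : Type*} [PartialOrder α] [DecidableEq α]
    {a : ℕ → α} {N : ℕ}
    (ha : MonotoneOn a (Set.Iio N)) : #(changePoints a N) ≤ #((range N).image a) := by
  have key : ∀ j ∈ changePoints a N, ∀ k ∈ changePoints a N, j < k → a (j + 1) < a (k + 1) := by
    intro j hj k hk hjk
    simp only [changePoints, mem_filter, mem_range] at hj hk
    have hk' : a k < a (k + 1) :=
      lt_of_le_of_ne (ha (Set.mem_Iio.2 (by omega)) (Set.mem_Iio.2 (by omega)) (by omega)) hk.2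
    exact lt_of_le_of_lt (ha (Set.mem_Iio.2 (by omega)) (Set.mem_Iio.2 (by omega)) hjk) hk'
  refine card_le_card_of_injOn (fun j => a (j + 1)) (fun j hj => ?_) fun j hj k hk heq => ?_
  · have := mem_range.1 (mem_filter.1 hj).1
    exact mem_image_of_mem a (mem_range.2 (by omega))
  · rcases lt_trichotomy j k with hjk | hjk | hjk
    · exact absurd heq (key j hj k hk hjk).ne
    · exact hjk
    · exact absurd heq (key k hk j hj hjk).ne'

theorem toLex_domRestrict_le_of_toLex_le {ι : Type*} [LinearOrder ι] {β : ι → Type*}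
    [∀ i, PartialOrder (β i)] {S : Set ι} (hS : IsLowerSet S) {x y : ∀ i, β i}
    (h : toLex x ≤ toLex y) : toLex (S.domRestrict x) ≤ toLex (S.domRestrict y) := by
  rcases h.eq_or_lt with h | ⟨i, hlt, hi⟩
  · rw [toLex_inj.1 h]
  · by_cases hiS : i ∈ S
    · exact le_of_lt ⟨⟨i, hiS⟩, fun j hj => hlt j hj, hi⟩
    · exact le_of_eq (congrArg toLex (funext fun j =>
        hlt j (lt_of_not_ge fun hij => hiS (hS hij j.2))))

theorem lexLe_iff_toLex_le {c : ℕ} {V : Fin c → Type*} [∀ t, LinearOrder (V t)]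
    {x y : ∀ t, V t} : lexLe x y ↔ toLex x ≤ toLex y := by
  rw [le_iff_eq_or_lt, toLex_inj]
  rfl

theorem card_image_le_prod_card_image_eval {α ι : Type*} [Fintype ι] {β : ι → Type*}
    [DecidableEq (∀ i, β i)]
    (s : Finset α) (F : α → ∀ i, β i) : #(s.image F) ≤ ∏ i, #(s.image fun a => F a i) := by
  rw [← Fintype.card_piFinset]
  refine card_le_card fun f hf => Fintype.mem_piFinset.2 fun i => ?_
  obtain ⟨a, ha, rfl⟩ := mem_image.1 hf
  exact mem_image_of_mem _ ha

theorem card_image_prefix_le_prod_nvals {n c : ℕ} {V : Fin c → Type*} [∀ t, LinearOrder (V t)]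
    (row : ℕ → ∀ t, V t) (i : Fin c) :
    #((range n).image fun j => toLex ((Set.Iic i).domRestrict (row j)))
      ≤ ∏ t ∈ univ.filter (· ≤ i), nvals n row t :=
  calc _ = #(((range n).image fun j => (Set.Iic i).domRestrict (row j)).image toLex) := by
        rw [image_image]
        rfl
    _ ≤ #((range n).image fun j => (Set.Iic i).domRestrict (row j)) := card_image_le
    _ ≤ _ := card_image_le_prod_card_image_eval (range n) _
    _ = _ := (prod_subtype (p := (· ∈ Set.Iic i)) _ (fun t => by simp) (nvals n row)).symm

theorem dirty_words_le_of_lex_sorted_table_general (n c w : ℕ)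
    (V : Fin c → Type*) [∀ t, LinearOrder (V t)]
    (row : ℕ → ∀ t, V t)
    (hsorted : ∀ j k : ℕ, j ≤ k → k < n → lexLe (row j) (row k))
    (i : Fin c) (pos : V i → ℕ) :
    ∑ p ∈ Finset.range (nvals n row i),
      ((Finset.range (n / w)).filter (fun q =>
        ∃ j₁ ∈ Finset.range w, ∃ j₂ ∈ Finset.range w,
          decide (pos (row (q * w + j₁) i) = p) ≠ decide (pos (row (q * w + j₂) i) = p))).card
      ≤ 2 * ∏ t ∈ Finset.univ.filter (fun t : Fin c => t ≤ i), nvals n row t := by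
  set code : ℕ → ℕ := fun j => pos (row j i)
  set prefixRow : ℕ → Lex (∀ t : Set.Iic i, V t) :=
    fun j => toLex ((Set.Iic i).domRestrict (row j))
  have hmono : MonotoneOn prefixRow (Set.Iio n) := fun j _ k hk hjk =>
    toLex_domRestrict_le_of_toLex_le (isLowerSet_Iic i)
      (lexLe_iff_toLex_le.1 (hsorted j k hjk hk))
  have hchange : changePoints code n ⊆ changePoints prefixRow n :=
    monotone_filter_right _ fun j _ hne heq =>
      hne (congrArg pos (congrFun heq ⟨i, Set.self_mem_Iic⟩))
  calc _ = ∑ q ∈ range (n / w), #{p ∈ range (nvals n row i) |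
          ∃ j₁ ∈ range w, ∃ j₂ ∈ range w,
            decide (code (q * w + j₁) = p) ≠ decide (code (q * w + j₂) = p)} := by
        simp only [card_filter]
        exact sum_comm
    _ ≤ ∑ q ∈ range (n / w), 2 * #(changePoints (fun j => code (q * w + j)) w) :=
        sum_le_sum fun q _ => card_nonconstant_indicators_le _ _ _
    _ ≤ 2 * #(changePoints code n) := by
        rw [← mul_sum]
        exact Nat.mul_le_mul_left 2
          (sum_card_changePoints_window_le code (Nat.div_mul_le_self n w))
    _ ≤ 2 * #((range n).image prefixRow) :=
        Nat.mul_le_mul_left 2 ((card_le_card hchange).trans hmono.card_changePoints_le)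
    _ ≤ _ := Nat.mul_le_mul_left 2 (card_image_prefix_le_prod_nvals row i)

/-- Let `row 0, …, row (n-1)` be rows (`c`-tuples) sorted lexicographically, with
`n_t = nvals n row t` distinct values in column `t`. Encode column `i` with unary
codes: each occurring value `v` of column `i` gets the bit vector of length `n_i`
whose only 1-bit is at position `pos v < n_i`, distinct occurring values getting
distinct positions. The bitmap for code position `p` has `j`-th bit
`decide (pos (row j i) = p)` and is partitioned into `n / w` words of `w`
consecutive bits (`w ≥ 1`, `w ∣ n`); a word is dirty when its bits are not all
equal. Then the total number of dirty words over the `n_i` bitmaps of column `i`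
is at most `2 · n_1 ⋯ n_i`. -/
theorem dirty_words_le_of_lex_sorted_table (n c w : ℕ) (hw : 1 ≤ w) (hdvd : w ∣ n)
    (V : Fin c → Type*) [∀ t, LinearOrder (V t)]
    (row : ℕ → ∀ t, V t)
    (hsorted : ∀ j k : ℕ, j ≤ k → k < n → lexLe (row j) (row k))
    (i : Fin c) (pos : V i → ℕ)
    (hposlt : ∀ j < n, pos (row j i) < nvals n row i)
    (hposinj : ∀ j < n, ∀ k < n, pos (row j i) = pos (row k i) → row j i = row k i) :
    ∑ p ∈ Finset.range (nvals n row i),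
      ((Finset.range (n / w)).filter (fun q =>
        ∃ j₁ ∈ Finset.range w, ∃ j₂ ∈ Finset.range w,
          decide (pos (row (q * w + j₁) i) = p) ≠ decide (pos (row (q * w + j₂) i) = p))).card
      ≤ 2 * ∏ t ∈ Finset.univ.filter (fun t : Fin c => t ≤ i), nvals n row t :=
  dirty_words_le_of_lex_sorted_table_general n c w V row hsorted i pos
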